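/- arXiv:1803.10507 — 3 statements merged into one kernel-verified Lean document; each statement's English description precedes it below -/
import Mathlib

section
/- Let H be a real symmetric 2×2 matrix with entries ψ_xx, ψ_xy, ψ_xy, ψ_yy, and let g be a positive definite symmetric 2×2 matrix with inverse entries g^xx, g^xy, g^yy. Suppose the discriminant ψ_xy² − ψ_xx·ψ_yy > 0 (H is indefinite) and g^xx·ψ_xx + 2·g^xy·ψ_xy + g^yy·ψ_yy = 0. Define s₁ = (−ψ_xy + √(ψ_xy² − ψ_xx·ψ_yy), ψ_xx) and s₂ = (−ψ_xy − √(ψ_xy² − ψ_xx·ψ_yy), ψ_xx). Then s₁ and s₂ are orthogonal with respect to g, i.e. Σ_{i,j} g_{ij} s₁^i s₂^j = 0. -/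
/-- Theorem 1 (linear-algebraic content): if the g-Laplacian of ψ vanishes at the
X-point, the two separatrix tangent vectors are g-orthogonal. -/
theorem xpoint_tangents_orthogonal
    (pxx pxy pyy gxx gxy gyy Gxx Gxy Gyy : ℝ)
    -- positive definiteness of the inverse metric (entries g^xx, g^xy, g^yy)
    (hposg : 0 < gxx) (hdetg : 0 < gxx * gyy - gxy ^ 2)
    -- the metric g_{ij} (entries Gxx, Gxy, Gyy) is the inverse of (g^xx, g^xy, g^yy)
    (hinv1 : Gxx * gxx + Gxy * gxy = 1) (hinv2 : Gxx * gxy + Gxy * gyy = 0)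
    (hinv3 : Gxy * gxx + Gyy * gxy = 0) (hinv4 : Gxy * gxy + Gyy * gyy = 1)
    -- indefinite Hessian (saddle point)
    (hD : 0 < pxy ^ 2 - pxx * pyy)
    -- vanishing g-Laplacian at the X-point
    (hlap : gxx * pxx + 2 * gxy * pxy + gyy * pyy = 0) :
    Gxx * ((-pxy + Real.sqrt (pxy ^ 2 - pxx * pyy)) * (-pxy - Real.sqrt (pxy ^ 2 - pxx * pyy)))
      + Gxy * ((-pxy + Real.sqrt (pxy ^ 2 - pxx * pyy)) * pxx
          + pxx * (-pxy - Real.sqrt (pxy ^ 2 - pxx * pyy)))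
      + Gyy * (pxx * pxx) = 0 := by
  set s := Real.sqrt (pxy ^ 2 - pxx * pyy) with hsdef
  have hs : s * s = pxy ^ 2 - pxx * pyy := Real.mul_self_sqrt hD.le
  have hGxx : Gxx * (gxx * gyy - gxy ^ 2) = gyy := by
    linear_combination gyy * hinv1 - gxy * hinv2
  have hGxy : Gxy * (gxx * gyy - gxy ^ 2) = -gxy := by
    linear_combination gyy * hinv3 - gxy * hinv4
  have hGyy : Gyy * (gxx * gyy - gxy ^ 2) = gxx := by
    linear_combination gxx * hinv4 - gxy * hinv3
  have hdet : (gxx * gyy - gxy ^ 2) ≠ 0 := ne_of_gt hdetg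
  have key : (gxx * gyy - gxy ^ 2) *
      (Gxx * ((-pxy + s) * (-pxy - s))
        + Gxy * ((-pxy + s) * pxx + pxx * (-pxy - s))
        + Gyy * (pxx * pxx)) = 0 := by
    linear_combination (pxy ^ 2 - s * s) * hGxx + (-2 * pxx * pxy) * hGxy
      + (pxx ^ 2) * hGyy + (-gyy) * hs + pxx * hlap
  exact (mul_eq_zero.mp key).resolve_left hdet
end

section
/- For ψ(x,y) = (2x² − y²)/2 and η = xy, the functions a = (2x² + y²)/(4x² + y²) and b = −xy/(4x² + y²) have no limit at the origin: the limit of a along the line y = 0 is 1/2 while along x = 0 it is 1; the limit of b along the line y = x is −1/5 while along y = 0 it is 0. In particular neither a nor b extends continuously to the X-point (0,0). -/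
/-! Both `a` and `b` are homogeneous of degree zero, hence constant on each punctured line
through the origin; two lines carrying different constants rule out a limit at the origin. -/

open Filter Topology

section Punctured

variable {R M X : Type*} [Zero R] [Zero M] [SMulWithZero R M] [NoZeroSMulDivisors R M]
  [TopologicalSpace R] [TopologicalSpace M] [ContinuousSMul R M]

theorem tendsto_smul_const_nhdsNE_zero {v : M} (hv : v ≠ 0) :
    Tendsto (fun t : R => t • v) (𝓝[≠] 0) (𝓝[≠] 0) := by
  refine tendsto_nhdsWithin_iff.mpr ⟨?_, ?_⟩
  · have hcont : Continuous (fun t : R => t • v) := continuous_id.smul continuous_const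
    exact (hcont.tendsto' 0 0 (zero_smul R v)).mono_left nhdsWithin_le_nhds
  · filter_upwards [self_mem_nhdsWithin] with t ht
    exact fun h => (eq_zero_or_eq_zero_of_smul_eq_zero h).elim ht hv

theorem not_exists_tendsto_nhdsNE_of_tendsto_smul [(𝓝[≠] (0 : R)).NeBot]
    [TopologicalSpace X] [T2Space X] {f : M → X} {v w : M} {L₁ L₂ : X}
    (hv : v ≠ 0) (hw : w ≠ 0) (hL : L₁ ≠ L₂)
    (h₁ : Tendsto (fun t : R => f (t • v)) (𝓝[≠] 0) (𝓝 L₁))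
    (h₂ : Tendsto (fun t : R => f (t • w)) (𝓝[≠] 0) (𝓝 L₂)) :
    ¬ ∃ L, Tendsto f (𝓝[≠] 0) (𝓝 L) := by
  rintro ⟨L, hf⟩
  have e₁ : L = L₁ := tendsto_nhds_unique (hf.comp (tendsto_smul_const_nhdsNE_zero hv)) h₁
  have e₂ : L = L₂ := tendsto_nhds_unique (hf.comp (tendsto_smul_const_nhdsNE_zero hw)) h₂
  exact hL (e₁.symm.trans e₂)

end Punctured

theorem tendsto_nhdsNE_of_forall_ne_eq {X Y : Type*} [TopologicalSpace X] [TopologicalSpace Y]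
    {f : X → Y} {x : X} {c : Y} (h : ∀ y ≠ x, f y = c) : Tendsto f (𝓝[≠] x) (𝓝 c) :=
  tendsto_const_nhds.congr' (eventually_nhdsWithin_of_forall fun y hy => (h y hy).symm)

/-- The structure functions a, b of Example 2 have direction-dependent limits at the
origin and hence admit no limit (no continuous extension) at the X-point. -/
theorem example2_no_limit_at_Xpoint :
    let a : ℝ × ℝ → ℝ := fun p => (2 * p.1 ^ 2 + p.2 ^ 2) / (4 * p.1 ^ 2 + p.2 ^ 2)
    let b : ℝ × ℝ → ℝ := fun p => -(p.1 * p.2) / (4 * p.1 ^ 2 + p.2 ^ 2)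
    Filter.Tendsto (fun x : ℝ => a (x, 0)) (nhdsWithin 0 {0}ᶜ) (nhds (1 / 2)) ∧
    Filter.Tendsto (fun y : ℝ => a (0, y)) (nhdsWithin 0 {0}ᶜ) (nhds 1) ∧
    Filter.Tendsto (fun t : ℝ => b (t, t)) (nhdsWithin 0 {0}ᶜ) (nhds (-(1 / 5))) ∧
    Filter.Tendsto (fun x : ℝ => b (x, 0)) (nhdsWithin 0 {0}ᶜ) (nhds 0) ∧
    (¬ ∃ L : ℝ, Filter.Tendsto a (nhdsWithin 0 {(0 : ℝ × ℝ)}ᶜ) (nhds L)) ∧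
    (¬ ∃ L : ℝ, Filter.Tendsto b (nhdsWithin 0 {(0 : ℝ × ℝ)}ᶜ) (nhds L)) := by
  intro a b
  have ha₁ : Tendsto (fun x : ℝ => a (x, 0)) (𝓝[≠] 0) (𝓝 (1 / 2)) :=
    tendsto_nhdsNE_of_forall_ne_eq fun x hx => by simp only [a]; field_simp; ring
  have ha₂ : Tendsto (fun y : ℝ => a (0, y)) (𝓝[≠] 0) (𝓝 1) :=
    tendsto_nhdsNE_of_forall_ne_eq fun y hy => by simp only [a]; field_simp; ring
  have hb₁ : Tendsto (fun t : ℝ => b (t, t)) (𝓝[≠] 0) (𝓝 (-(1 / 5))) :=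
    tendsto_nhdsNE_of_forall_ne_eq fun t ht => by simp only [b]; field_simp; ring
  have hb₂ : Tendsto (fun x : ℝ => b (x, 0)) (𝓝[≠] 0) (𝓝 0) :=
    tendsto_nhdsNE_of_forall_ne_eq fun x _ => by simp [b]
  refine ⟨ha₁, ha₂, hb₁, hb₂, ?_, ?_⟩
  · refine not_exists_tendsto_nhdsNE_of_tendsto_smul (R := ℝ) (f := a)
      (v := (1, 0)) (w := (0, 1)) (by simp) (by simp) (by norm_num : (1 / 2 : ℝ) ≠ 1) ?_ ?_
    · simpa only [Prod.smul_mk, smul_eq_mul, mul_one, mul_zero] using ha₁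
    · simpa only [Prod.smul_mk, smul_eq_mul, mul_one, mul_zero] using ha₂
  · refine not_exists_tendsto_nhdsNE_of_tendsto_smul (R := ℝ) (f := b)
      (v := (1, 1)) (w := (1, 0)) (by simp) (by simp) (by norm_num : (-(1 / 5) : ℝ) ≠ 0) ?_ ?_
    · simpa only [Prod.smul_mk, smul_eq_mul, mul_one, mul_zero] using hb₁
    · simpa only [Prod.smul_mk, smul_eq_mul, mul_one, mul_zero] using hb₂
end

section
/- Let ψ : ℝ² → ℝ be C², let g be a (constant, for simplicity) positive definite symmetric 2×2 matrix with √g := √det(g), and let a, b : ℝ² → ℝ be C¹ functions. Define η_x = −√g·a·ψ^y − b·ψ_x and η_y = √g·a·ψ^x − b·ψ_y, where ψ^x = g^{xx}ψ_x + g^{xy}ψ_y and ψ^y = g^{xy}ψ_x + g^{yy}ψ_y. Then the 1-form η_x dx + η_y dy is closed (∂_y η_x = ∂_x η_y) if and only if a·Δψ + ∇ψ·∇a + {ψ, b} = 0, where Δψ = (1/√g)(∂_x(√g ψ^x) + ∂_y(√g ψ^y)), ∇ψ·∇a = ψ^x a_x + ψ^y a_y, and {ψ,b} = (ψ_x b_y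 − ψ_y b_x)/√g. -/
/-!
The curl of `η` splits as
`∂_y η_x − ∂_x η_y = −√g·(∂_x(a ψ^x) + ∂_y(a ψ^y)) − (∂_y(b ψ_x) − ∂_x(b ψ_y))`.
By the product rule the first bracket is `a·(∂_x ψ^x + ∂_y ψ^y) + ψ^x a_x + ψ^y a_y`, and since
the mixed partials of the `C²` function `ψ` commute the second is `ψ_x b_y − ψ_y b_x`. So the curl
is `−√g` times the left-hand side of the consistency equation, and `√g ≠ 0`.
-/

variable {E : Type*} [NormedAddCommGroup E] [NormedSpace ℝ E]

theorem ContDiff.differentiable_fderiv_apply {ψ : E → ℝ} (hψ : ContDiff ℝ 2 ψ) (v : E) :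
    Differentiable ℝ fun r => fderiv ℝ ψ r v :=
  ((hψ.fderiv_right (m := 1) (by norm_num)).clm_apply contDiff_const).differentiable one_ne_zero

theorem ContDiff.fderiv_fderiv_apply_comm {ψ : E → ℝ} (hψ : ContDiff ℝ 2 ψ) (q v w : E) :
    fderiv ℝ (fun r => fderiv ℝ ψ r v) q w = fderiv ℝ (fun r => fderiv ℝ ψ r w) q v := by
  have hdψ : DifferentiableAt ℝ (fderiv ℝ ψ) q :=
    (hψ.fderiv_right (m := 1) (by norm_num)).differentiable one_ne_zero q
  simp only [fderiv_clm_apply hdψ (differentiableAt_const _), fderiv_fun_const, Pi.zero_apply,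
    ContinuousLinearMap.comp_zero, zero_add, ContinuousLinearMap.flip_apply]
  exact (hψ.contDiffAt.isSymmSndFDerivAt (by simp)) w v

theorem fderiv_mul_fderiv_apply_sub {ψ b : E → ℝ} (hψ : ContDiff ℝ 2 ψ) {q : E}
    (hb : DifferentiableAt ℝ b q) (v w : E) :
    fderiv ℝ (fun r => b r * fderiv ℝ ψ r v) q w - fderiv ℝ (fun r => b r * fderiv ℝ ψ r w) q v
      = fderiv ℝ ψ q v * fderiv ℝ b q w - fderiv ℝ ψ q w * fderiv ℝ b q v := by
  rw [fderiv_fun_mul hb (hψ.differentiable_fderiv_apply v q),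
    fderiv_fun_mul hb (hψ.differentiable_fderiv_apply w q)]
  simp only [add_apply, smul_apply, smul_eq_mul, hψ.fderiv_fderiv_apply_comm q v w]
  ring

theorem fderiv_mul_add_fderiv_mul {a u v : E → ℝ} {q : E} (ha : DifferentiableAt ℝ a q)
    (hu : DifferentiableAt ℝ u q) (hv : DifferentiableAt ℝ v q) (x y : E) :
    fderiv ℝ (fun r => a r * u r) q x + fderiv ℝ (fun r => a r * v r) q y
      = a q * (fderiv ℝ u q x + fderiv ℝ v q y) + (u q * fderiv ℝ a q x + v q * fderiv ℝ a q y) := by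
  simp only [fderiv_fun_mul ha hu, fderiv_fun_mul ha hv, add_apply, smul_apply, smul_eq_mul]
  ring

theorem consistency_equation_general
    (ψ a b : ℝ × ℝ → ℝ) (gxx gxy gyy Gxx Gxy Gyy : ℝ)
    (hψ : ContDiff ℝ 2 ψ) (ha : ContDiff ℝ 1 a) (hb : ContDiff ℝ 1 b)
    -- g (lower indices Gxx, Gxy, Gyy) is constant, symmetric positive definite
    (hdet : 0 < Gxx * Gyy - Gxy ^ 2) :
    let sg : ℝ := Real.sqrt (Gxx * Gyy - Gxy ^ 2)
    let px : ℝ × ℝ → ℝ := fun q => fderiv ℝ ψ q (1, 0)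
    let py : ℝ × ℝ → ℝ := fun q => fderiv ℝ ψ q (0, 1)
    let pux : ℝ × ℝ → ℝ := fun q => gxx * px q + gxy * py q   -- ψ^x
    let puy : ℝ × ℝ → ℝ := fun q => gxy * px q + gyy * py q   -- ψ^y
    let ηx : ℝ × ℝ → ℝ := fun q => -(sg * a q * puy q) - b q * px q
    let ηy : ℝ × ℝ → ℝ := fun q => sg * a q * pux q - b q * py q
    let lap : ℝ × ℝ → ℝ := fun q =>
      (fderiv ℝ (fun r => sg * pux r) q (1, 0)
        + fderiv ℝ (fun r => sg * puy r) q (0, 1)) / sg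
    ∀ q : ℝ × ℝ,
      (fderiv ℝ ηx q (0, 1) = fderiv ℝ ηy q (1, 0)) ↔
      (a q * lap q
        + (pux q * fderiv ℝ a q (1, 0) + puy q * fderiv ℝ a q (0, 1))
        + (px q * fderiv ℝ b q (0, 1) - py q * fderiv ℝ b q (1, 0)) / sg = 0) := by
  intro sg px py pux puy ηx ηy lap q
  have hsg : sg ≠ 0 := (Real.sqrt_pos.mpr hdet).ne'
  have hpx : DifferentiableAt ℝ px q := hψ.differentiable_fderiv_apply _ q
  have hpy : DifferentiableAt ℝ py q := hψ.differentiable_fderiv_apply _ q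
  have hpux : DifferentiableAt ℝ pux q := by fun_prop
  have hpuy : DifferentiableAt ℝ puy q := by fun_prop
  have haq : DifferentiableAt ℝ a q := ha.differentiable one_ne_zero q
  have hbq : DifferentiableAt ℝ b q := hb.differentiable one_ne_zero q
  have hηx : fderiv ℝ ηx q (0, 1) = -sg * fderiv ℝ (fun r => a r * puy r) q (0, 1)
      - fderiv ℝ (fun r => b r * px r) q (0, 1) := by
    have : ηx = fun r => -sg * (a r * puy r) - b r * px r := funext fun r => by ring
    rw [this, fderiv_fun_sub (by fun_prop) (by fun_prop), fderiv_const_mul (by fun_prop)]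
    rfl
  have hηy : fderiv ℝ ηy q (1, 0) = sg * fderiv ℝ (fun r => a r * pux r) q (1, 0)
      - fderiv ℝ (fun r => b r * py r) q (1, 0) := by
    have : ηy = fun r => sg * (a r * pux r) - b r * py r := funext fun r => by ring
    rw [this, fderiv_fun_sub (by fun_prop) (by fun_prop), fderiv_const_mul (by fun_prop)]
    rfl
  have hlap : lap q = fderiv ℝ pux q (1, 0) + fderiv ℝ puy q (0, 1) := by
    simp only [lap, fderiv_const_mul hpux, fderiv_const_mul hpuy, smul_apply, smul_eq_mul]
    field_simp
  have hdiv := fderiv_mul_add_fderiv_mul haq hpux hpuy (1, 0) (0, 1)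
  have hcurl : fderiv ℝ (fun r => b r * px r) q (0, 1) - fderiv ℝ (fun r => b r * py r) q (1, 0)
      = px q * fderiv ℝ b q (0, 1) - py q * fderiv ℝ b q (1, 0) :=
    fderiv_mul_fderiv_apply_sub hψ hbq (1, 0) (0, 1)
  have hclosed : fderiv ℝ ηx q (0, 1) - fderiv ℝ ηy q (1, 0) = -sg * (a q * lap q
      + (pux q * fderiv ℝ a q (1, 0) + puy q * fderiv ℝ a q (0, 1))
      + (px q * fderiv ℝ b q (0, 1) - py q * fderiv ℝ b q (1, 0)) / sg) := by
    rw [hηx, hηy, hlap]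
    field_simp
    linear_combination -sg * hdiv - hcurl
  rw [← sub_eq_zero, hclosed, mul_eq_zero, neg_eq_zero]
  simp [hsg]

/-- The consistency equation (Eq. (5)): the 1-form η_x dx + η_y dy built from ψ, the
constant metric g and the functions a, b is closed iff a·Δψ + ∇ψ·∇a + {ψ,b} = 0. -/
theorem consistency_equation
    (ψ a b : ℝ × ℝ → ℝ) (gxx gxy gyy Gxx Gxy Gyy : ℝ)
    (hψ : ContDiff ℝ 2 ψ) (ha : ContDiff ℝ 1 a) (hb : ContDiff ℝ 1 b)
    -- g (lower indices Gxx, Gxy, Gyy) is constant, symmetric positive definite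
    (hpos : 0 < Gxx) (hdet : 0 < Gxx * Gyy - Gxy ^ 2)
    -- upper-index entries g^xx, g^xy, g^yy are the inverse of g
    (hinv1 : Gxx * gxx + Gxy * gxy = 1) (hinv2 : Gxx * gxy + Gxy * gyy = 0)
    (hinv3 : Gxy * gxx + Gyy * gxy = 0) (hinv4 : Gxy * gxy + Gyy * gyy = 1) :
    let sg : ℝ := Real.sqrt (Gxx * Gyy - Gxy ^ 2)
    let px : ℝ × ℝ → ℝ := fun q => fderiv ℝ ψ q (1, 0)
    let py : ℝ × ℝ → ℝ := fun q => fderiv ℝ ψ q (0, 1)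
    let pux : ℝ × ℝ → ℝ := fun q => gxx * px q + gxy * py q   -- ψ^x
    let puy : ℝ × ℝ → ℝ := fun q => gxy * px q + gyy * py q   -- ψ^y
    let ηx : ℝ × ℝ → ℝ := fun q => -(sg * a q * puy q) - b q * px q
    let ηy : ℝ × ℝ → ℝ := fun q => sg * a q * pux q - b q * py q
    let lap : ℝ × ℝ → ℝ := fun q =>
      (fderiv ℝ (fun r => sg * pux r) q (1, 0)
        + fderiv ℝ (fun r => sg * puy r) q (0, 1)) / sg
    ∀ q : ℝ × ℝ,
      (fderiv ℝ ηx q (0, 1) = fderiv ℝ ηy q (1, 0)) ↔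
      (a q * lap q
        + (pux q * fderiv ℝ a q (1, 0) + puy q * fderiv ℝ a q (0, 1))
        + (px q * fderiv ℝ b q (0, 1) - py q * fderiv ℝ b q (1, 0)) / sg = 0) :=
  consistency_equation_general ψ a b gxx gxy gyy Gxx Gxy Gyy hψ ha hb hdet
end
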